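/- arXiv:2410.11909 — 9 statements merged into one kernel-verified Lean document; each statement's English description precedes it below -/
import Mathlib

section
/- Let a, b, c, d be integers with gcd(a,b) = 1 and gcd(c,d) = 1. Let x, y be integers with a·x + b·y = 1 (Bézout coefficients of a and b). Then gcd(a·d − b·c, c·x + d·y) = 1. -/
theorem IsCoprime.mul_sub_mul_of_mul_add_mul_eq_one {R : Type*} [CommRing R] {a b c d x y : R}
    (hcd : IsCoprime c d) (hxy : a * x + b * y = 1) :
    IsCoprime (a * d - b * c) (c * x + d * y) := by
  obtain ⟨m, n, hmn⟩ := hcd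
  -- this combination equals `(a * x + b * y) * (m * c + n * d)`
  refine ⟨n * x - m * y, m * a + n * b, ?_⟩
  linear_combination (a * x + b * y) * hmn + hxy

theorem gcd_det_bezout_general (a b c d x y : ℤ)
    (hcd : Int.gcd c d = 1)
    (hxy : a * x + b * y = 1) :
    Int.gcd (a * d - b * c) (c * x + d * y) = 1 :=
  Int.isCoprime_iff_gcd_eq_one.mp <|
    (Int.isCoprime_iff_gcd_eq_one.mpr hcd).mul_sub_mul_of_mul_add_mul_eq_one hxy

theorem gcd_det_bezout (a b c d x y : ℤ)
    (hab : Int.gcd a b = 1) (hcd : Int.gcd c d = 1)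
    (hxy : a * x + b * y = 1) :
    Int.gcd (a * d - b * c) (c * x + d * y) = 1 :=
  gcd_det_bezout_general a b c d x y hcd hxy
end

section
/- Let a, b, c be integers with a ≠ 0 or b ≠ 0. Let x₀, y₀ be integers with a·x₀ + b·y₀ = gcd(a,b). Define the 2×2 integer matrix T with columns ( (c/gcd(a,b,c))·x₀, (c/gcd(a,b,c))·y₀ ) and ( −b/gcd(a,b), a/gcd(a,b) ). Then the image of ℤ² under T equals { (x,y) ∈ ℤ² : c ∣ a·x + b·y }. -/
/-!
Put `g = gcd(a, b)`, `A = a / g`, `B = b / g`, so that `A x₀ + B y₀ = 1`. Then `(x₀, y₀)`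
and `(-B, A)` form a basis of `ℤ²` adapted to the linear form `φ v = A v₀ + B v₁`, which
takes the value `1` on the first vector and vanishes on the second. Scaling the first vector
by `C` therefore yields a matrix whose image is `{v | C ∣ φ v}`, over any commutative ring.
Finally `a v₀ + b v₁ = g φ v`, and `c ∣ g n ↔ c / gcd(g, c) ∣ n` because `c / gcd(g, c)` is
coprime to `g / gcd(g, c)`.
-/

open Matrix

section Bezout

variable {R : Type*} [CommRing R] {A B x₀ y₀ : R}

theorem mulVec_bezout_matrix (C s t : R) :
    !![C * x₀, -B; C * y₀, A] *ᵥ ![s, t] = ![C * x₀ * s - B * t, C * y₀ * s + A * t] := by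
  ext i; fin_cases i <;> simp [mulVec, dotProduct, Fin.sum_univ_two, sub_eq_add_neg]

theorem range_mulVec_bezout_matrix (h : A * x₀ + B * y₀ = 1) (C : R) :
    Set.range (!![C * x₀, -B; C * y₀, A]).mulVec =
      {v : Fin 2 → R | C ∣ A * v 0 + B * v 1} := by
  ext v
  constructor
  · rintro ⟨w, rfl⟩
    refine ⟨w 0, ?_⟩
    simp only [mulVec, dotProduct, of_apply, cons_val', cons_val_fin_one, cons_val_zero,
      Fin.sum_univ_two, cons_val_one, neg_mul]
    linear_combination C * w 0 * h
  · rintro ⟨s, hs⟩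
    refine ⟨![s, x₀ * v 1 - y₀ * v 0], ?_⟩
    rw [mulVec_bezout_matrix]
    ext i; fin_cases i
    · simp only [Fin.zero_eta, cons_val_zero]
      linear_combination v 0 * h - x₀ * hs
    · simp only [Fin.mk_one, cons_val_one, cons_val_fin_one]
      linear_combination v 1 * h - y₀ * hs

end Bezout

theorem Int.dvd_mul_iff_div_gcd_dvd {g c : ℤ} (hg : g ≠ 0) (n : ℤ) :
    c ∣ g * n ↔ c / (Int.gcd g c : ℤ) ∣ n := by
  have hd : 0 < Int.gcd g c := Int.gcd_pos_of_ne_zero_left c hg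
  obtain ⟨G, C, hGC, hG, hC⟩ := Int.exists_gcd_one hd
  have hd0 : (Int.gcd g c : ℤ) ≠ 0 := by positivity
  generalize (Int.gcd g c : ℤ) = d at hG hC hd0
  subst hG hC
  rw [Int.mul_ediv_cancel _ hd0, mul_right_comm, mul_dvd_mul_iff_right hd0]
  have hCG : IsCoprime C G := (Int.isCoprime_iff_gcd_eq_one.mpr hGC).symm
  exact ⟨hCG.dvd_of_dvd_mul_left, (·.mul_left G)⟩

theorem range_mulVec_eq_dvd_set (a b c : ℤ) (hab : a ≠ 0 ∨ b ≠ 0)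
    (x₀ y₀ : ℤ) (hbez : a * x₀ + b * y₀ = Int.gcd a b)
    (T : Matrix (Fin 2) (Fin 2) ℤ)
    (hT : T = !![(c / Int.gcd (Int.gcd a b) c) * x₀, -b / Int.gcd a b;
                 (c / Int.gcd (Int.gcd a b) c) * y₀,  a / Int.gcd a b]) :
    Set.range T.mulVec = {v : Fin 2 → ℤ | c ∣ a * v 0 + b * v 1} := by
  subst hT
  set g : ℤ := (Int.gcd a b : ℤ)
  have hg : g ≠ 0 := by rw [Ne, Int.natCast_eq_zero, Int.gcd_eq_zero_iff]; tauto
  have ha : a / g * g = a := Int.ediv_mul_cancel (Int.gcd_dvd_left a b)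
  have hb : b / g * g = b := Int.ediv_mul_cancel (Int.gcd_dvd_right a b)
  have hbez' : a / g * x₀ + b / g * y₀ = 1 :=
    mul_right_cancel₀ hg (by linear_combination x₀ * ha + y₀ * hb + hbez)
  rw [Int.neg_ediv_of_dvd (Int.gcd_dvd_right a b), range_mulVec_bezout_matrix hbez']
  ext v
  have hφ : a * v 0 + b * v 1 = g * (a / g * v 0 + b / g * v 1) := by
    linear_combination -v 0 * ha - v 1 * hb
  rw [Set.mem_ofPred_eq, Set.mem_ofPred_eq, hφ, Int.dvd_mul_iff_div_gcd_dvd hg]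
end

section
/- Let a, b, c be integers with a ≠ 0 or b ≠ 0. The subgroup L = { (x,y) ∈ ℤ² : c ∣ a·x + b·y } of ℤ² has index |c| / gcd(a,b,c) in ℤ² when c ≠ 0; equivalently, any 2×2 integer matrix T whose columns generate L satisfies |det T| = |c| / gcd(a,b,c). -/
open Matrix

/-- The subgroup `{(x, y) ∈ ℤ² : c ∣ a·x + b·y}` of `ℤ²`. -/
def dvdLattice (a b c : ℤ) : AddSubgroup (Fin 2 → ℤ) where
  carrier := {v | c ∣ a * v 0 + b * v 1}
  zero_mem' := by simp
  add_mem' := by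
    intro u v hu hv
    have := dvd_add hu hv
    simpa [mul_add, add_add_add_comm] using this
  neg_mem' := by
    intro v hv
    have : a * (-v) 0 + b * (-v) 1 = -(a * v 0 + b * v 1) := by
      simp [Pi.neg_apply]; ring
    rw [Set.mem_setOf_eq, this]
    exact hv.neg_right

/-!
`dvdLattice a b c` is the kernel of `v ↦ a v₀ + b v₁ mod c`. By Bézout the image of this map
in `ℤ/|c|` is the cyclic group generated by `gcd(a, b)`, of order `|c| / gcd(a, b, c)`.
The determinant statement then follows from the fact that the image of `ℤⁿ` under an integer
matrix `T` has index `|det T|`, with index `0` (infinite) exactly when `det T = 0`.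
-/

open AddSubgroup

theorem AddSubgroup.index_eq_natAbs_det_of_range_mulVec_eq {ι : Type*} [Fintype ι] [DecidableEq ι]
    (T : Matrix ι ι ℤ) (L : AddSubgroup (ι → ℤ)) (hL : Set.range T.mulVec = L) :
    L.index = T.det.natAbs := by
  by_cases hdet : T.det = 0
  · -- A nonzero `w` with `w ᵥ* T = 0` is orthogonal to `L`, hence so is `L.index • w ∈ L`.
    obtain ⟨w, hw, hwT⟩ := exists_vecMul_eq_zero_iff.mpr hdet
    have hww : w ⬝ᵥ w ≠ 0 := mt dotProduct_self_eq_zero.mp hw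
    obtain ⟨u, hu⟩ : L.index • w ∈ Set.range T.mulVec := hL ▸ L.nsmul_index_mem w
    have : (L.index : ℤ) * (w ⬝ᵥ w) = 0 := by
      rw [← smul_eq_mul, ← dotProduct_smul, Nat.cast_smul_eq_nsmul ℤ, ← hu, dotProduct_mulVec,
        hwT, zero_dotProduct]
    simpa [hdet, hww] using this
  · have hinj : Function.Injective T.mulVecLin := by
      rw [← LinearMap.ker_eq_bot, LinearMap.ker_eq_bot']
      intro v hv
      by_contra hv0
      exact hdet (exists_mulVec_eq_zero_iff.mp ⟨v, hv0, hv⟩)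
    obtain rfl : L = (LinearMap.range T.mulVecLin).toAddSubgroup := SetLike.coe_injective hL.symm
    refine (Submodule.natAbs_det_equiv _ (LinearEquiv.ofInjective _ hinj)).symm.trans ?_
    rw [← LinearMap.det_toLin']
    congr

theorem AddMonoidHom.index_comap_zmultiples {G : Type*} [AddGroup G] (f : G →+ ℤ) (g : ℕ)
    (hf : f.range = zmultiples (g : ℤ)) {c : ℤ} (hc : c ≠ 0) :
    ((zmultiples c).comap f).index = c.natAbs / c.natAbs.gcd g := by
  set n := c.natAbs
  let φ : G →+ ZMod n := (Int.castAddHom (ZMod n)).comp f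
  have hker : (zmultiples c).comap f = φ.ker := by
    ext x
    rw [mem_comap, Int.mem_zmultiples_iff, AddMonoidHom.mem_ker, ← Int.natAbs_dvd]
    exact (ZMod.intCast_zmod_eq_zero_iff_dvd _ n).symm
  have hrange : φ.range = zmultiples (g : ZMod n) := by
    rw [AddMonoidHom.range_comp, hf, AddMonoidHom.map_zmultiples]
    simp
  rw [hker, index_ker, hrange, Nat.card_zmultiples, ZMod.addOrderOf_coe _ (by simpa [n] using hc)]

def pairForm (a b : ℤ) : (Fin 2 → ℤ) →+ ℤ :=
  AddMonoidHom.mk' (fun v => a * v 0 + b * v 1) fun u v => by simp only [Pi.add_apply]; ring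

theorem range_pairForm (a b : ℤ) : (pairForm a b).range = zmultiples (Int.gcd a b : ℤ) := by
  ext z
  rw [AddMonoidHom.mem_range, Int.mem_zmultiples_iff, Int.coe_gcd, gcd_dvd_iff_exists]
  constructor
  · rintro ⟨v, rfl⟩
    exact ⟨v 0, v 1, rfl⟩
  · rintro ⟨x, y, rfl⟩
    exact ⟨![x, y], rfl⟩

theorem dvdLattice_eq_comap_pairForm (a b c : ℤ) :
    dvdLattice a b c = (zmultiples c).comap (pairForm a b) := by
  ext v
  exact Int.mem_zmultiples_iff.symm

theorem index_dvdLattice_general (a b c : ℤ) (hc : c ≠ 0) :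
    (dvdLattice a b c).index = c.natAbs / Int.gcd (Int.gcd a b) c ∧
    ∀ T : Matrix (Fin 2) (Fin 2) ℤ,
      Set.range T.mulVec = (dvdLattice a b c : Set (Fin 2 → ℤ)) →
      T.det.natAbs = c.natAbs / Int.gcd (Int.gcd a b) c := by
  have hindex : (dvdLattice a b c).index = c.natAbs / Int.gcd (Int.gcd a b) c := by
    rw [dvdLattice_eq_comap_pairForm,
      (pairForm a b).index_comap_zmultiples _ (range_pairForm a b) hc, Int.gcd_comm _ c]
    rfl
  refine ⟨hindex, fun T hT => ?_⟩
  rw [← hindex, index_eq_natAbs_det_of_range_mulVec_eq T _ hT]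

theorem index_dvdLattice (a b c : ℤ) (hab : a ≠ 0 ∨ b ≠ 0) (hc : c ≠ 0) :
    (dvdLattice a b c).index = c.natAbs / Int.gcd (Int.gcd a b) c ∧
    ∀ T : Matrix (Fin 2) (Fin 2) ℤ,
      Set.range T.mulVec = (dvdLattice a b c : Set (Fin 2 → ℤ)) →
      T.det.natAbs = c.natAbs / Int.gcd (Int.gcd a b) c :=
  index_dvdLattice_general a b c hc
end

section
/- Let Q be a 2×2 rational matrix with Q ≠ 0 and det Q = 0. Write Q = (p/q)·(column vector (α₁, α₂)) · (row vector (β₁, β₂)) with gcd(p,q)=1, q > 0, gcd(α₁,α₂)=1, gcd(β₁,β₂)=1. Then for v = (x,y) ∈ ℤ², Q·v ∈ ℤ² if and only if q ∣ β₁·x + β₂·y, and the subgroup { v ∈ ℤ² : Q·v ∈ ℤ² } has index q in ℤ². -/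
open Matrix

/-- The subgroup of integer vectors `v` with `Q·v` integral. -/
def intLattice (Q : Matrix (Fin 2) (Fin 2) ℚ) : AddSubgroup (Fin 2 → ℤ) where
  carrier := {v | ∀ i, ∃ n : ℤ, Q.mulVec (fun j => (v j : ℚ)) i = n}
  zero_mem' := by
    intro i
    exact ⟨0, by simp [Matrix.mulVec]⟩
  add_mem' := by
    intro u v hu hv i
    obtain ⟨m, hm⟩ := hu i
    obtain ⟨n, hn⟩ := hv i
    refine ⟨m + n, ?_⟩
    have h : (fun j => (((u + v) j : ℤ) : ℚ)) = (fun j => ((u j : ℤ) : ℚ)) + fun j => ((v j : ℤ) : ℚ) := by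
      funext j; simp
    rw [h, Matrix.mulVec_add, Pi.add_apply, hm, hn]
    push_cast; ring
  neg_mem' := by
    intro v hv i
    obtain ⟨n, hn⟩ := hv i
    refine ⟨-n, ?_⟩
    have h : (fun j => (((-v) j : ℤ) : ℚ)) = -fun j => ((v j : ℤ) : ℚ) := by
      funext j; simp
    rw [h, Matrix.mulVec_neg, Pi.neg_apply, hn]
    push_cast; ring

/-!
`Q` maps `v` to `(p/q) (β ⬝ᵥ v) α`. Since `α` is primitive, some integer combination of its
entries is `1`, so this vector is integral iff the scalar `(p/q) (β ⬝ᵥ v)` is an integer, i.e.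
(as `p` and `q` are coprime) iff `q ∣ β ⬝ᵥ v`. The lattice is therefore the kernel of
`v ↦ β ⬝ᵥ v mod q`, which is onto `ZMod q` because `β` is primitive too.
-/

variable {ι : Type*} [Fintype ι]

theorem smul_outer_mulVec_intCast_apply (c : ℚ) (α β v : ι → ℤ) (i : ι) :
    ((c • Matrix.of fun i j => ((α i * β j : ℤ) : ℚ)) *ᵥ fun j => (v j : ℚ)) i
      = c * ((β ⬝ᵥ v : ℤ) : ℚ) * α i := by
  simp only [mulVec, dotProduct, Matrix.smul_apply, of_apply, smul_eq_mul]
  push_cast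
  rw [Finset.mul_sum, Finset.sum_mul]
  exact Finset.sum_congr rfl fun j _ => by ring

theorem forall_exists_mul_eq_intCast_iff {α w : ι → ℤ} (hw : w ⬝ᵥ α = 1) (r : ℚ) :
    (∀ i, ∃ n : ℤ, r * α i = n) ↔ ∃ n : ℤ, r = n := by
  constructor
  · intro h
    choose n hn using h
    refine ⟨w ⬝ᵥ n, ?_⟩
    have hw' : ∑ i, (w i : ℚ) * α i = 1 := by exact_mod_cast hw
    calc r = r * ∑ i, (w i : ℚ) * α i := by rw [hw', mul_one]
      _ = ∑ i, (w i : ℚ) * (r * α i) := by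
        rw [Finset.mul_sum]; exact Finset.sum_congr rfl fun i _ => by ring
      _ = ((w ⬝ᵥ n : ℤ) : ℚ) := by simp only [hn, dotProduct]; push_cast; rfl
  · rintro ⟨n, rfl⟩ i
    exact ⟨n * α i, by push_cast; rfl⟩

theorem exists_div_mul_eq_intCast_iff {p q : ℤ} (hpq : IsCoprime p q) (hq : q ≠ 0) (s : ℤ) :
    (∃ n : ℤ, (p : ℚ) / q * s = n) ↔ q ∣ s := by
  have hq' : (q : ℚ) ≠ 0 := by exact_mod_cast hq
  constructor
  · rintro ⟨n, hn⟩
    have hps : p * s = q * n := by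
      rw [div_mul_eq_mul_div, div_eq_iff hq'] at hn
      exact_mod_cast hn.trans (mul_comm _ _)
    exact hpq.symm.dvd_of_dvd_mul_left ⟨n, hps⟩
  · rintro ⟨t, rfl⟩
    exact ⟨p * t, by push_cast; field_simp⟩

def dotProductModHom (q : ℕ) (β : ι → ℤ) : (ι → ℤ) →+ ZMod q :=
  (Int.castAddHom (ZMod q)).comp (AddMonoidHom.mk' (β ⬝ᵥ ·) (dotProduct_add β))

theorem mem_ker_dotProductModHom {q : ℕ} {β : ι → ℤ} {v : ι → ℤ} :
    v ∈ (dotProductModHom q β).ker ↔ (q : ℤ) ∣ β ⬝ᵥ v :=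
  ZMod.intCast_zmod_eq_zero_iff_dvd _ _

theorem dotProductModHom_surjective (q : ℕ) {β w : ι → ℤ} (hw : w ⬝ᵥ β = 1) :
    Function.Surjective (dotProductModHom q β) := by
  intro c
  refine ⟨(c.cast : ℤ) • w, ?_⟩
  change (((β ⬝ᵥ ((c.cast : ℤ) • w) : ℤ)) : ZMod q) = c
  rw [dotProduct_smul, dotProduct_comm, hw, smul_eq_mul, mul_one, ZMod.intCast_cast, ZMod.cast_id', id]

theorem index_ker_dotProductModHom (q : ℕ) {β w : ι → ℤ} (hw : w ⬝ᵥ β = 1) :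
    (dotProductModHom q β).ker.index = q := by
  rw [AddSubgroup.index_ker, AddMonoidHom.range_eq_top.mpr (dotProductModHom_surjective q hw),
    AddSubgroup.card_top, Nat.card_zmod]

theorem exists_dotProduct_eq_one_of_gcd_eq_one {γ : Fin 2 → ℤ} (h : Int.gcd (γ 0) (γ 1) = 1) :
    ∃ w, w ⬝ᵥ γ = 1 := by
  obtain ⟨x, y, hxy⟩ := Int.isCoprime_iff_gcd_eq_one.mpr h
  exact ⟨![x, y], by simpa [dotProduct, Fin.sum_univ_two] using hxy⟩

theorem intLattice_rank_one_general (Q : Matrix (Fin 2) (Fin 2) ℚ)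
    (p : ℤ) (q : ℕ) (hq : 0 < q) (hpq : Nat.gcd p.natAbs q = 1)
    (α β : Fin 2 → ℤ)
    (hα : Int.gcd (α 0) (α 1) = 1) (hβ : Int.gcd (β 0) (β 1) = 1)
    (hfac : Q = ((p : ℚ) / (q : ℚ)) • Matrix.of fun i j => ((α i * β j : ℤ) : ℚ)) :
    (∀ v : Fin 2 → ℤ, v ∈ intLattice Q ↔ (q : ℤ) ∣ β 0 * v 0 + β 1 * v 1) ∧
    (intLattice Q).index = q := by
  obtain ⟨wα, hwα⟩ := exists_dotProduct_eq_one_of_gcd_eq_one hα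
  obtain ⟨wβ, hwβ⟩ := exists_dotProduct_eq_one_of_gcd_eq_one hβ
  have hpq' : IsCoprime p q := Int.isCoprime_iff_gcd_eq_one.mpr hpq
  have mem_iff (v : Fin 2 → ℤ) : v ∈ intLattice Q ↔ (q : ℤ) ∣ β ⬝ᵥ v := by
    change (∀ i, _) ↔ _
    simp only [hfac, smul_outer_mulVec_intCast_apply, forall_exists_mul_eq_intCast_iff hwα]
    exact_mod_cast exists_div_mul_eq_intCast_iff hpq' (by exact_mod_cast hq.ne') _
  have hker : intLattice Q = (dotProductModHom q β).ker := by
    ext v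
    rw [mem_iff, mem_ker_dotProductModHom]
  refine ⟨fun v => by rw [mem_iff, dotProduct, Fin.sum_univ_two], ?_⟩
  rw [hker, index_ker_dotProductModHom q hwβ]

theorem intLattice_rank_one (Q : Matrix (Fin 2) (Fin 2) ℚ) (hQ : Q ≠ 0)
    (hdet : Q.det = 0)
    (p : ℤ) (q : ℕ) (hq : 0 < q) (hpq : Nat.gcd p.natAbs q = 1)
    (α β : Fin 2 → ℤ)
    (hα : Int.gcd (α 0) (α 1) = 1) (hβ : Int.gcd (β 0) (β 1) = 1)
    (hfac : Q = ((p : ℚ) / (q : ℚ)) • Matrix.of fun i j => ((α i * β j : ℤ) : ℚ)) :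
    (∀ v : Fin 2 → ℤ, v ∈ intLattice Q ↔ (q : ℤ) ∣ β 0 * v 0 + β 1 * v 1) ∧
    (intLattice Q).index = q :=
  intLattice_rank_one_general Q p q hq hpq α β hα hβ hfac
end

section
/- Let a, b, c be integers with gcd(b,c) = 1, and let e be the largest positive divisor of a that is coprime to c (i.e., e = max{ n ∈ ℕ : n ∣ a and gcd(n,c) = 1 }, for a ≠ 0). Let u be an integer with c·u ≡ 1 (mod e). Then gcd(a, c·(1 + b·u) − b) = 1. -/
/-!
Write `y = c * (1 + b * u) - b = c + b * (c * u - 1)`. Since `c` is coprime to both `b` and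
`c * u - 1`, it is coprime to `y`; hence `g = gcd(a, y)` is a divisor of `a` coprime to `c`. The
divisors of `a` coprime to `c` are closed under `lcm`, so the largest one, `e`, is a multiple of
all of them, and `g ∣ e ∣ c * u - 1`. But `c * u - 1` is coprime to `y = c + b * (c * u - 1)`,
so `g = 1`.
-/

theorem Nat.dvd_of_isGreatest_of_lcm_mem {S : Set ℕ} {e n : ℕ} (hS_pos : ∀ m ∈ S, 0 < m)
    (hS_lcm : ∀ m ∈ S, ∀ k ∈ S, Nat.lcm m k ∈ S) (he : IsGreatest S e) (hn : n ∈ S) :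
    n ∣ e := by
  have hlcm_le : Nat.lcm n e ≤ e := he.2 (hS_lcm n hn e he.1)
  have hle_lcm : e ≤ Nat.lcm n e :=
    Nat.le_of_dvd (Nat.lcm_pos (hS_pos n hn) (hS_pos e he.1)) (Nat.dvd_lcm_right n e)
  rw [← le_antisymm hlcm_le hle_lcm]
  exact Nat.dvd_lcm_left n e

def coprimeDivisors (a : ℤ) (k : ℕ) : Set ℕ := {d | 0 < d ∧ (d : ℤ) ∣ a ∧ d.Coprime k}

theorem lcm_mem_coprimeDivisors {a : ℤ} {k m n : ℕ} (hm : m ∈ coprimeDivisors a k)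
    (hn : n ∈ coprimeDivisors a k) : Nat.lcm m n ∈ coprimeDivisors a k := by
  obtain ⟨hm_pos, hma, hmk⟩ := hm
  obtain ⟨hn_pos, hna, hnk⟩ := hn
  refine ⟨Nat.lcm_pos hm_pos hn_pos, ?_,
    (hmk.mul_left hnk).coprime_dvd_left (Nat.lcm_dvd_mul m n)⟩
  rw [Int.natCast_dvd] at hma hna ⊢
  exact Nat.lcm_dvd hma hna

section CommRing

variable {R : Type*} [CommRing R]

theorem isCoprime_self_mul_sub_one (c u : R) : IsCoprime c (c * u - 1) :=
  ⟨u, -1, by ring⟩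

theorem mul_one_add_mul_sub_eq (b c u : R) : c * (1 + b * u) - b = c + (c * u - 1) * b := by
  ring

theorem IsCoprime.isCoprime_right_mul_one_add_mul_sub {b c : R} (hbc : IsCoprime b c) (u : R) :
    IsCoprime c (c * (1 + b * u) - b) := by
  have h := ((isCoprime_self_mul_sub_one c u).mul_right hbc.symm).mul_add_left_right 1
  rwa [mul_one, ← mul_one_add_mul_sub_eq] at h

theorem isCoprime_mul_sub_one_mul_one_add_mul_sub (b c u : R) :
    IsCoprime (c * u - 1) (c * (1 + b * u) - b) := by
  rw [mul_one_add_mul_sub_eq]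
  exact (isCoprime_self_mul_sub_one c u).symm.add_mul_left_right b

end CommRing

theorem gcd_eq_one_of_modular_inverse_general (a b c : ℤ) (ha : a ≠ 0)
    (hbc : Int.gcd b c = 1) (e : ℕ)
    (he_dvd : (e : ℤ) ∣ a) (he_cop : Nat.gcd e c.natAbs = 1)
    (he_max : ∀ n : ℕ, 0 < n → (n : ℤ) ∣ a → Nat.gcd n c.natAbs = 1 → n ≤ e)
    (u : ℤ) (hu : (e : ℤ) ∣ c * u - 1) :
    Int.gcd a (c * (1 + b * u) - b) = 1 := by
  set y := c * (1 + b * u) - b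
  set g := Int.gcd a y
  have he : IsGreatest (coprimeDivisors a c.natAbs) e :=
    ⟨⟨he_max 1 one_pos (one_dvd a) (Nat.gcd_one_left _), he_dvd, he_cop⟩,
      fun n hn => he_max n hn.1 hn.2.1 hn.2.2⟩
  have hg_y : (g : ℤ) ∣ y := Int.gcd_dvd_right a y
  have hg_c : IsCoprime (g : ℤ) c :=
    ((Int.isCoprime_iff_gcd_eq_one.mpr hbc).isCoprime_right_mul_one_add_mul_sub u).symm
      |>.of_isCoprime_of_dvd_left hg_y
  have hg_e : g ∣ e :=
    Nat.dvd_of_isGreatest_of_lcm_mem (fun _ hm => hm.1)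
      (fun _ hm _ hk => lcm_mem_coprimeDivisors hm hk) he
      ⟨Int.gcd_pos_of_ne_zero_left y ha, Int.gcd_dvd_left a y,
        Int.isCoprime_iff_gcd_eq_one.mp hg_c⟩
  have hg_unit : IsUnit (g : ℤ) :=
    (isCoprime_mul_sub_one_mul_one_add_mul_sub b c u).isUnit_of_dvd'
      ((Int.natCast_dvd_natCast.mpr hg_e).trans hu) hg_y
  exact Nat.isUnit_iff.mp (Int.ofNat_isUnit.mp hg_unit)

theorem gcd_eq_one_of_modular_inverse (a b c : ℤ) (ha : a ≠ 0)
    (hbc : Int.gcd b c = 1) (e : ℕ)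
    (he_pos : 0 < e) (he_dvd : (e : ℤ) ∣ a) (he_cop : Nat.gcd e c.natAbs = 1)
    (he_max : ∀ n : ℕ, 0 < n → (n : ℤ) ∣ a → Nat.gcd n c.natAbs = 1 → n ≤ e)
    (u : ℤ) (hu : (e : ℤ) ∣ c * u - 1) :
    Int.gcd a (c * (1 + b * u) - b) = 1 :=
  gcd_eq_one_of_modular_inverse_general a b c ha hbc e he_dvd he_cop he_max u hu
end

section
/- Let a, b, c be integers with gcd(a,b,c) = 1. Then for all integers x, y with gcd(x,y) = 1, the integer gcd(a·x + b·y, c·y) divides a·c. -/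
theorem IsCoprime.dvd_of_dvd_mul_of_dvd_mul {R : Type*} [CommSemiring R] {d m x y : R}
    (hxy : IsCoprime x y) (hx : d ∣ m * x) (hy : d ∣ m * y) : d ∣ m := by
  obtain ⟨u, v, huv⟩ := hxy
  have hm : m = u * (m * x) + v * (m * y) :=
    calc m = m * (u * x + v * y) := by rw [huv, mul_one]
      _ = u * (m * x) + v * (m * y) := by ring
  rw [hm]
  exact dvd_add (hx.mul_left u) (hy.mul_left v)

/-- Eliminating `b` from `a x + b y` and `c y` leaves `a c x`; together with `a c y` this
pins `d` to a divisor of `a c`. -/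
theorem IsCoprime.dvd_mul_of_dvd_add_of_dvd_mul {R : Type*} [CommRing R] {a b c x y d : R}
    (hxy : IsCoprime x y) (h₁ : d ∣ a * x + b * y) (h₂ : d ∣ c * y) : d ∣ a * c := by
  have hx : d ∣ a * c * x := by
    have h := (h₁.mul_left c).sub (h₂.mul_left b)
    rwa [show c * (a * x + b * y) - b * (c * y) = a * c * x by ring] at h
  have hy : d ∣ a * c * y := by
    simpa only [mul_assoc] using h₂.mul_left a
  exact hxy.dvd_of_dvd_mul_of_dvd_mul hx hy

theorem gcd_dvd_ac_general (a b c : ℤ)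
    (x y : ℤ) (hxy : Int.gcd x y = 1) :
    (Int.gcd (a * x + b * y) (c * y) : ℤ) ∣ a * c :=
  (Int.isCoprime_iff_gcd_eq_one.mpr hxy).dvd_mul_of_dvd_add_of_dvd_mul
    (Int.gcd_dvd_left _ _) (Int.gcd_dvd_right _ _)

theorem gcd_dvd_ac (a b c : ℤ) (habc : Int.gcd (Int.gcd a b) c = 1)
    (x y : ℤ) (hxy : Int.gcd x y = 1) :
    (Int.gcd (a * x + b * y) (c * y) : ℤ) ∣ a * c :=
  gcd_dvd_ac_general a b c x y hxy
end

section
/- Let a, b, c be integers with gcd(a,b,c) = 1 and a·c ≠ 0. Then there exist integers x, y with gcd(x,y) = 1 such that gcd(a·x + b·y, c·y) = |a·c|. -/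
/-!
Take `y = a` and `x = -b + t * c`: then `a * x + b * y = a * c * t` and `c * y = a * c`, so the gcd
is `|a * c|`, and `gcd x y = 1` as soon as `-b + t * c` is coprime to `a`. Such a `t` exists: the
product of the primes of `a` not dividing `b` works, because a prime dividing both `a` and `b`
cannot divide `c`.
-/

open UniqueFactorizationMonoid in
theorem exists_isRelPrime_add_mul {R : Type*} [CommRing R] [IsDomain R]
    [UniqueFactorizationMonoid R] {a b c : R} (ha : a ≠ 0)
    (habc : ∀ d, d ∣ a → d ∣ b → d ∣ c → IsUnit d) :
    ∃ t, IsRelPrime (b + t * c) a := by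
  classical
  set t := ((factors a).filter (fun q => ¬ q ∣ b)).prod
  have not_dvd_b_of_dvd_t {p : R} (hp : Prime p) (hpt : p ∣ t) : ¬ p ∣ b := by
    obtain ⟨q, hq, hpq⟩ := hp.exists_mem_multiset_dvd hpt
    rw [Multiset.mem_filter] at hq
    exact fun hpb => hq.2 ((hp.associated_of_dvd (prime_of_factor q hq.1) hpq).symm.dvd.trans hpb)
  have dvd_t_of_not_dvd_b {p : R} (hp : Prime p) (hpa : p ∣ a) (hpb : ¬ p ∣ b) : p ∣ t := by
    obtain ⟨q, hq, hpq⟩ := exists_mem_factors_of_dvd ha hp.irreducible hpa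
    exact hpq.dvd.trans (Multiset.dvd_prod
      (Multiset.mem_filter.mpr ⟨hq, fun hqb => hpb (hpq.dvd.trans hqb)⟩))
  refine ⟨t, WfDvdMonoid.isRelPrime_of_no_irreducible_factors (fun h => ha h.2) ?_⟩
  intro p hirr hpx hpa
  have hp : Prime p := hirr.prime
  by_cases hpb : p ∣ b
  · have hptc : p ∣ t * c := (dvd_add_right hpb).mp hpx
    rcases hp.dvd_or_dvd hptc with hpt | hpc
    · exact not_dvd_b_of_dvd_t hp hpt hpb
    · exact hp.not_isUnit (habc p hpa hpb hpc)
  · exact hpb ((dvd_add_left ((dvd_t_of_not_dvd_b hp hpa hpb).mul_right c)).mp hpx)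

theorem exists_gcd_eq_abs_ac (a b c : ℤ) (habc : Int.gcd (Int.gcd a b) c = 1)
    (hac : a * c ≠ 0) :
    ∃ x y : ℤ, Int.gcd x y = 1 ∧ (Int.gcd (a * x + b * y) (c * y) : ℤ) = |a * c| := by
  have habc' : ∀ d, d ∣ a → d ∣ -b → d ∣ c → IsUnit d := fun d hda hdb hdc =>
    isUnit_of_dvd_one <| by
      simpa [habc] using Int.dvd_coe_gcd (Int.dvd_coe_gcd hda (dvd_neg.mp hdb)) hdc
  obtain ⟨t, ht⟩ := exists_isRelPrime_add_mul (left_ne_zero_of_mul hac) habc'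
  refine ⟨-b + t * c, a, Int.isCoprime_iff_gcd_eq_one.mp (isRelPrime_iff_isCoprime.mp ht), ?_⟩
  calc (Int.gcd (a * (-b + t * c) + b * a) (c * a) : ℤ)
      = Int.gcd (a * c * t) (a * c * 1) := by ring_nf
    _ = |a * c| := by rw [Int.gcd_mul_left, Int.gcd_one_right, mul_one, Int.abs_eq_natAbs]
end

section
/- Let D be a 2×2 lower-triangular rational matrix with nonzero determinant (D₁₂ = 0, D₁₁·D₂₂ ≠ 0), and let Φ be a nonzero rational number. Suppose A ∈ ℚ₂ₓ₂ and T ∈ ℤ₂ₓ₂ satisfy A₂₁ − A₁₂ = Φ, det T > 0, and Dᵀ·A·T ∈ ℤ₂ₓ₂. Write D = d·D̃ with d = GCD of entries of D and D̃ integral with coprime entries. Then the denominator (in lowest terms) of the rational number Φ·det(D̃)·d divides det T. -/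
open Matrix

theorem den_dvd_det_T (D : Matrix (Fin 2) (Fin 2) ℚ) (hD12 : D 0 1 = 0)
    (hDdet : D 0 0 * D 1 1 ≠ 0) (Φ : ℚ) (hΦ : Φ ≠ 0)
    (A : Matrix (Fin 2) (Fin 2) ℚ) (T : Matrix (Fin 2) (Fin 2) ℤ)
    (hA : A 1 0 - A 0 1 = Φ) (hT : 0 < T.det)
    (hint : ∀ i j, ∃ n : ℤ, (Dᵀ * A * T.map (Int.cast : ℤ → ℚ)) i j = n)
    (d : ℚ) (hd : 0 < d) (Dt : Matrix (Fin 2) (Fin 2) ℤ)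
    (hfac : D = d • Dt.map (Int.cast : ℤ → ℚ))
    (hprim : Nat.gcd (Nat.gcd (Dt 0 0).natAbs (Dt 0 1).natAbs)
      (Nat.gcd (Dt 1 0).natAbs (Dt 1 1).natAbs) = 1) :
    ((Φ * (Dt.det : ℚ) * d).den : ℤ) ∣ T.det := by
  have hd0 : d ≠ 0 := hd.ne'
  have hDe : ∀ i j, D i j = d * (Dt i j : ℚ) := by
    intro i j; rw [hfac]; simp
  have hDt01 : Dt 0 1 = 0 := by
    have h := hDe 0 1
    rw [hD12] at h
    have h' : (Dt 0 1 : ℚ) = 0 := by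
      rcases mul_eq_zero.mp h.symm with h' | h'
      · exact absurd h' hd0
      · exact h'
    exact_mod_cast h'
  obtain ⟨n00, h00⟩ := hint 0 0
  obtain ⟨n01, h01⟩ := hint 0 1
  obtain ⟨n10, h10⟩ := hint 1 0
  obtain ⟨n11, h11⟩ := hint 1 1
  simp only [Matrix.mul_apply, Fin.sum_univ_two, Matrix.transpose_apply,
    Matrix.map_apply, hDe, hDt01, Int.cast_zero, mul_zero, zero_mul, add_zero,
    zero_add] at h00 h01 h10 h11
  -- the key integrality identity
  have key : Φ * (Dt.det : ℚ) * d * (T.det : ℚ) =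
      ((Dt 1 1 * T 0 1 * n00 - Dt 1 0 * T 0 1 * n10 + Dt 0 0 * T 1 1 * n10
        - Dt 1 1 * T 0 0 * n01 + Dt 1 0 * T 0 0 * n11 - Dt 0 0 * T 1 0 * n11 : ℤ) : ℚ) := by
    rw [← hA]
    simp only [Matrix.det_fin_two, hDt01]
    push_cast
    linear_combination ((Dt 1 1 : ℚ) * (T 0 1 : ℚ)) * h00
      + ((Dt 0 0 : ℚ) * (T 1 1 : ℚ) - (Dt 1 0 : ℚ) * (T 0 1 : ℚ)) * h10
      - ((Dt 1 1 : ℚ) * (T 0 0 : ℚ)) * h01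
      + ((Dt 1 0 : ℚ) * (T 0 0 : ℚ) - (Dt 0 0 : ℚ) * (T 1 0 : ℚ)) * h11
  -- from q * n = integer, conclude q.den ∣ n
  set q : ℚ := Φ * (Dt.det : ℚ) * d with hq
  set m : ℤ := Dt 1 1 * T 0 1 * n00 - Dt 1 0 * T 0 1 * n10 + Dt 0 0 * T 1 1 * n10
        - Dt 1 1 * T 0 0 * n01 + Dt 1 0 * T 0 0 * n11 - Dt 0 0 * T 1 0 * n11 with hm
  have hnum : q.num * T.det = m * q.den := by
    have hden : (q.den : ℚ) ≠ 0 := by exact_mod_cast q.den_ne_zero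
    have hq' : (q.num : ℚ) = q * q.den := by
      rw [eq_comm, ← eq_div_iff hden, Rat.num_div_den]
    have h1 : (q.num : ℚ) * T.det = m * q.den :=
      calc (q.num : ℚ) * T.det = (q * (T.det : ℚ)) * q.den := by rw [hq']; ring
        _ = (m : ℚ) * q.den := by rw [key]
    exact_mod_cast h1
  have hdvd : (q.den : ℤ) ∣ q.num * T.det := ⟨m, by linarith [hnum]⟩
  have hcop : IsCoprime (q.den : ℤ) q.num := by
    rw [Int.isCoprime_iff_gcd_eq_one]
    simpa [Int.gcd, Nat.coprime_comm] using q.reduced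
  exact hcop.dvd_of_dvd_mul_left hdvd
end

section
/- Let Φ = p/q be a rational number in lowest terms with q > 0, and define A = ((0,0),(Φ,0)) and T = ((q,0),(0,1)). Then Tᵀ·A·T is an integer matrix, A₂₁ − A₁₂ = Φ, and det T = q; moreover q is the minimal positive determinant among integer matrices T' with Tᵀ'·A·T' integral. -/
open Matrix

theorem landau_nonlinear_minimal (p : ℤ) (q : ℤ) (hq : 0 < q)
    (hpq : Int.gcd p q = 1) (Φ : ℚ) (hΦ : Φ = (p : ℚ) / (q : ℚ))
    (A : Matrix (Fin 2) (Fin 2) ℚ) (hA : A = !![0, 0; Φ, 0])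
    (T : Matrix (Fin 2) (Fin 2) ℤ) (hT : T = !![q, 0; 0, 1]) :
    (∀ i j, ∃ n : ℤ,
      ((T.map (Int.cast : ℤ → ℚ))ᵀ * A * T.map (Int.cast : ℤ → ℚ)) i j = n) ∧
    A 1 0 - A 0 1 = Φ ∧
    T.det = q ∧
    ∀ T' : Matrix (Fin 2) (Fin 2) ℤ, 0 < T'.det →
      (∀ i j, ∃ n : ℤ,
        ((T'.map (Int.cast : ℤ → ℚ))ᵀ * A * T'.map (Int.cast : ℤ → ℚ)) i j = n) →
      q ≤ T'.det := by
  have hq0 : (q : ℚ) ≠ 0 := by exact_mod_cast hq.ne'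
  -- general formula for the product entries
  have key : ∀ (S : Matrix (Fin 2) (Fin 2) ℤ) (i j : Fin 2),
      ((S.map (Int.cast : ℤ → ℚ))ᵀ * A * S.map (Int.cast : ℤ → ℚ)) i j
        = Φ * (S 1 i : ℚ) * (S 0 j : ℚ) := by
    intro S i j
    subst hA
    fin_cases i <;> fin_cases j <;>
      simp [Matrix.mul_apply, Fin.sum_univ_succ, Matrix.map_apply, mul_comm,
        mul_assoc, mul_left_comm]
  -- divisibility lemma
  have dvdkey : ∀ m : ℤ, (∃ n : ℤ, Φ * (m : ℚ) = n) → q ∣ m := by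
    intro m ⟨n, hn⟩
    rw [hΦ] at hn
    have h2 : (p : ℚ) * m = n * q := by field_simp at hn; linarith
    have h3 : p * m = n * q := by exact_mod_cast h2
    have h4 : q ∣ m * p := by rw [mul_comm m p, h3]; exact ⟨n, mul_comm n q⟩
    have hco : Int.gcd q p = 1 := by rw [Int.gcd_comm]; exact hpq
    exact Int.dvd_of_dvd_mul_left_of_gcd_one h4 hco
  refine ⟨?_, ?_, ?_, ?_⟩
  · intro i j
    rw [key T i j, hT]
    fin_cases i <;> fin_cases j
    · exact ⟨0, by simp⟩
    · exact ⟨0, by simp⟩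
    · exact ⟨p, by simp [hΦ]; field_simp⟩
    · exact ⟨0, by simp⟩
  · subst hA; simp
  · subst hT; simp [Matrix.det_fin_two]
  · intro T' hdet hint
    have h1 : q ∣ T' 1 1 * T' 0 0 := by
      have := hint 1 0; rw [key T' 1 0] at this
      obtain ⟨n, hn⟩ := this
      exact dvdkey _ ⟨n, by push_cast; rw [← hn]; ring⟩
    have h2 : q ∣ T' 1 0 * T' 0 1 := by
      have := hint 0 1; rw [key T' 0 1] at this
      obtain ⟨n, hn⟩ := this
      exact dvdkey _ ⟨n, by push_cast; rw [← hn]; ring⟩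
    have hdvd : q ∣ T'.det := by
      rw [Matrix.det_fin_two]
      exact dvd_sub (by rw [mul_comm]; exact h1) (by rw [mul_comm]; exact h2)
    exact Int.le_of_dvd hdet hdvd
end
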